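/- arXiv:1307.1764 — 4 statements merged into one kernel-verified Lean document; each statement's English description precedes it below -/
import Mathlib

section
/- If {A_j} is a finite family of 2×2 complex matrices satisfying the completeness relation ∑_j A_j† A_j = I (Kraus operators of a measurement), then ∑_j |det(A_j)| ≤ 1. -/
/-!
By AM-GM on the entries, `2 |ad - bc| ≤ |a|² + |b|² + |c|² + |d|² = tr (AᴴA)`, so each
`|det A_j|` is at most `tr (A_jᴴ A_j) / 2`; summing over `j` gives at most `tr 1 / 2 = 1`.
-/

namespace Matrix

variable {𝕜 : Type*} [RCLike 𝕜]

theorem re_trace_conjTranspose_mul_self {m n : Type*} [Fintype m] [Fintype n]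
    (A : Matrix m n 𝕜) : RCLike.re (Aᴴ * A).trace = ∑ i, ∑ j, ‖A i j‖ ^ 2 := by
  rw [Finset.sum_comm]
  simp only [trace, diag_apply, mul_apply, conjTranspose_apply, map_sum, RCLike.star_def,
    RCLike.conj_mul, ← RCLike.ofReal_pow, RCLike.ofReal_re]

theorem two_mul_norm_det_le_re_trace_conjTranspose_mul_self (A : Matrix (Fin 2) (Fin 2) 𝕜) :
    2 * ‖A.det‖ ≤ RCLike.re (Aᴴ * A).trace := by
  have h := norm_sub_le (A 0 0 * A 1 1) (A 0 1 * A 1 0)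
  rw [norm_mul, norm_mul] at h
  rw [det_fin_two, re_trace_conjTranspose_mul_self]
  simp only [Fin.sum_univ_two]
  nlinarith [sq_nonneg (‖A 0 0‖ - ‖A 1 1‖), sq_nonneg (‖A 0 1‖ - ‖A 1 0‖)]

end Matrix

open Matrix

/-- For Kraus operators {A_j} on a qubit with ∑ A_jᴴ A_j = 1, ∑ |det A_j| ≤ 1. -/
theorem sum_abs_det_le_one {ι : Type*} [Fintype ι]
    (A : ι → Matrix (Fin 2) (Fin 2) ℂ)
    (hA : ∑ j, (A j).conjTranspose * A j = 1) :
    ∑ j, ‖(A j).det‖ ≤ 1 := by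
  have htrace : ∑ j, RCLike.re ((A j)ᴴ * A j).trace = 2 := by
    rw [← map_sum, ← trace_sum, hA, trace_one]
    simp
  have hdet : 2 * ∑ j, ‖(A j).det‖ ≤ 2 := calc
    2 * ∑ j, ‖(A j).det‖ = ∑ j, 2 * ‖(A j).det‖ := Finset.mul_sum ..
    _ ≤ ∑ j, RCLike.re ((A j)ᴴ * A j).trace := Finset.sum_le_sum fun j _ ↦
      two_mul_norm_det_le_re_trace_conjTranspose_mul_self (A j)
    _ = 2 := htrace
  linarith
end

section
/- The function f(a,t) = √(a² − t²) defined on the convex set {(a,t) ∈ ℝ² : a ≥ t ≥ 0} is concave. -/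
/-!
On the cone `|t| ≤ a` the function `√(a² - t²)` is the Lorentzian length, which is positively
homogeneous, so concavity reduces to superadditivity: the reverse triangle inequality of Minkowski
space. That in turn follows from the reverse Cauchy–Schwarz inequality, whose proof is the identity
`(x₁y₁ - x₂y₂)² - (x₁² - x₂²)(y₁² - y₂²) = (x₁y₂ - x₂y₁)²`.
-/

open Set

namespace Real

variable {x₁ x₂ y₁ y₂ : ℝ}

lemma sq_sub_sq_nonneg_of_abs_le (hx : |x₂| ≤ x₁) : 0 ≤ x₁ ^ 2 - x₂ ^ 2 := by
  rw [sub_nonneg, ← sq_abs x₂]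
  exact pow_le_pow_left₀ (abs_nonneg _) hx 2

lemma mul_sub_mul_nonneg_of_abs_le (hx : |x₂| ≤ x₁) (hy : |y₂| ≤ y₁) :
    0 ≤ x₁ * y₁ - x₂ * y₂ := by
  have h := mul_le_mul hx hy (abs_nonneg _) ((abs_nonneg _).trans hx)
  rw [← abs_mul] at h
  linarith [le_abs_self (x₂ * y₂)]

lemma sqrt_sq_sub_sq_mul_le (hx : |x₂| ≤ x₁) (hy : |y₂| ≤ y₁) :
    √(x₁ ^ 2 - x₂ ^ 2) * √(y₁ ^ 2 - y₂ ^ 2) ≤ x₁ * y₁ - x₂ * y₂ := by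
  rw [← sqrt_mul (sq_sub_sq_nonneg_of_abs_le hx)]
  refine sqrt_le_iff.mpr ⟨mul_sub_mul_nonneg_of_abs_le hx hy, ?_⟩
  nlinarith [sq_nonneg (x₁ * y₂ - x₂ * y₁)]

lemma sqrt_sq_sub_sq_add_le (hx : |x₂| ≤ x₁) (hy : |y₂| ≤ y₁) :
    √(x₁ ^ 2 - x₂ ^ 2) + √(y₁ ^ 2 - y₂ ^ 2) ≤ √((x₁ + y₁) ^ 2 - (x₂ + y₂) ^ 2) := by
  have hX := sq_sqrt (sq_sub_sq_nonneg_of_abs_le hx)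
  have hY := sq_sqrt (sq_sub_sq_nonneg_of_abs_le hy)
  refine le_sqrt_of_sq_le ?_
  nlinarith [sqrt_sq_sub_sq_mul_le hx hy]

lemma sqrt_sq_sub_sq_mul_left {c : ℝ} (hc : 0 ≤ c) (x₁ x₂ : ℝ) :
    √((c * x₁) ^ 2 - (c * x₂) ^ 2) = c * √(x₁ ^ 2 - x₂ ^ 2) := by
  rw [show (c * x₁) ^ 2 - (c * x₂) ^ 2 = c ^ 2 * (x₁ ^ 2 - x₂ ^ 2) by ring,
    sqrt_mul (sq_nonneg c), sqrt_sq hc]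

end Real

lemma abs_snd_smul_le_fst_smul {c : ℝ} (hc : 0 ≤ c) {p : ℝ × ℝ} (hp : |p.2| ≤ p.1) :
    |(c • p).2| ≤ (c • p).1 := by
  simpa [abs_mul, abs_of_nonneg hc] using mul_le_mul_of_nonneg_left hp hc

lemma convex_abs_snd_le_fst : Convex ℝ {p : ℝ × ℝ | |p.2| ≤ p.1} := by
  intro p hp q hq a b ha hb _
  simp only [mem_ofPred_eq, Prod.fst_add, Prod.snd_add]
  exact (abs_add_le _ _).trans
    (add_le_add (abs_snd_smul_le_fst_smul ha hp) (abs_snd_smul_le_fst_smul hb hq))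

theorem concaveOn_sqrt_sq_sub_sq_of_abs_le :
    ConcaveOn ℝ {p : ℝ × ℝ | |p.2| ≤ p.1} (fun p : ℝ × ℝ => √(p.1 ^ 2 - p.2 ^ 2)) := by
  refine ⟨convex_abs_snd_le_fst, fun p hp q hq a b ha hb _ => ?_⟩
  have hsum := Real.sqrt_sq_sub_sq_add_le (abs_snd_smul_le_fst_smul ha hp)
    (abs_snd_smul_le_fst_smul hb hq)
  simpa only [Prod.smul_fst, Prod.smul_snd, smul_eq_mul, Prod.fst_add, Prod.snd_add,
    Real.sqrt_sq_sub_sq_mul_left ha, Real.sqrt_sq_sub_sq_mul_left hb] using hsum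

/-- f(a,t) = √(a² − t²) is concave on {(a,t) : a ≥ t ≥ 0}. -/
theorem concaveOn_sqrt_sq_sub_sq :
    ConcaveOn ℝ {p : ℝ × ℝ | p.2 ≥ 0 ∧ p.1 ≥ p.2}
      (fun p : ℝ × ℝ => Real.sqrt (p.1 ^ 2 - p.2 ^ 2)) := by
  refine concaveOn_sqrt_sq_sub_sq_of_abs_le.subset (fun p ⟨hp₂, hp⟩ => ?_) ?_
  · rwa [mem_ofPred_eq, abs_of_nonneg hp₂]
  · intro p ⟨hp₂, hp⟩ q ⟨hq₂, hq⟩ a b ha hb _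
    show _ ∧ _
    simp only [Prod.smul_fst, Prod.smul_snd, smul_eq_mul, Prod.fst_add, Prod.snd_add]
    constructor <;> nlinarith
end

section
/- The quantity D(a) = d₁ − 2d₂ + 4d₃ (Cayley's 2×2×2 hyperdeterminant of the amplitude tensor a_{ijk}) satisfies D(A·a) = det(A)² · D(a), where A·a denotes the action of a 2×2 matrix A on the first index: (A·a)_{ijk} = ∑_{i'} A_{ii'} a_{i'jk}. -/
/-!
Slice the tensor along its first index into two 2×2 matrices `M = a 0`, `N = a 1`.
Then `det (x • M + y • N)` is a binary quadratic form in `(x, y)`, and Cayley's hyperdeterminant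
is its discriminant. Acting by `A` on the first index replaces the pencil `x • M + y • N` by a linear
change of the variables `(x, y)` with matrix `Aᵀ`, and the discriminant of a binary quadratic form
picks up the square of the determinant of such a substitution.
-/

/-- d₁ of the CKW 3-tangle. -/
def d₁ (a : Fin 2 → Fin 2 → Fin 2 → ℂ) : ℂ :=
  (a 0 0 0) ^ 2 * (a 1 1 1) ^ 2 + (a 0 0 1) ^ 2 * (a 1 1 0) ^ 2
    + (a 0 1 0) ^ 2 * (a 1 0 1) ^ 2 + (a 1 0 0) ^ 2 * (a 0 1 1) ^ 2

/-- d₂ of the CKW 3-tangle. -/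
def d₂ (a : Fin 2 → Fin 2 → Fin 2 → ℂ) : ℂ :=
  a 0 0 0 * a 1 1 1 * a 0 1 1 * a 1 0 0 + a 0 0 0 * a 1 1 1 * a 1 0 1 * a 0 1 0
    + a 0 0 0 * a 1 1 1 * a 1 1 0 * a 0 0 1 + a 0 1 1 * a 1 0 0 * a 1 0 1 * a 0 1 0
    + a 0 1 1 * a 1 0 0 * a 1 1 0 * a 0 0 1 + a 1 0 1 * a 0 1 0 * a 1 1 0 * a 0 0 1

/-- d₃ of the CKW 3-tangle. -/
def d₃ (a : Fin 2 → Fin 2 → Fin 2 → ℂ) : ℂ :=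
  a 0 0 0 * a 1 1 0 * a 1 0 1 * a 0 1 1 + a 1 1 1 * a 0 0 1 * a 0 1 0 * a 1 0 0


/-- Cayley's 2×2×2 hyperdeterminant D = d₁ − 2d₂ + 4d₃. -/
def hyperdet (a : Fin 2 → Fin 2 → Fin 2 → ℂ) : ℂ := d₁ a - 2 * d₂ a + 4 * d₃ a

/-- Action of a 2×2 matrix on the first index of a 2×2×2 tensor. -/
noncomputable def actFst (A : Matrix (Fin 2) (Fin 2) ℂ) (a : Fin 2 → Fin 2 → Fin 2 → ℂ) :
    Fin 2 → Fin 2 → Fin 2 → ℂ :=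
  fun i j k => ∑ i', A i i' * a i' j k

theorem discrim_linear_subst {R : Type*} [CommRing R] (p q r α β γ δ : R) :
    discrim (α ^ 2 * p + α * β * q + β ^ 2 * r)
        (2 * α * γ * p + (α * δ + β * γ) * q + 2 * β * δ * r)
        (γ ^ 2 * p + γ * δ * q + δ ^ 2 * r) =
      (α * δ - β * γ) ^ 2 * discrim p q r := by
  simp only [discrim]
  ring

namespace Matrix

variable {R : Type*} [CommRing R]

/-- The polarization of the 2×2 determinant: `mixedDet M M = 2 * det M`. -/
def mixedDet (M N : Matrix (Fin 2) (Fin 2) R) : R :=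
  M 0 0 * N 1 1 + N 0 0 * M 1 1 - M 0 1 * N 1 0 - N 0 1 * M 1 0

theorem det_smul_add_smul (M N : Matrix (Fin 2) (Fin 2) R) (x y : R) :
    det (x • M + y • N) = x ^ 2 * det M + x * y * mixedDet M N + y ^ 2 * det N := by
  simp only [det_fin_two, mixedDet, add_apply, smul_apply, smul_eq_mul]
  ring

theorem mixedDet_smul_add_smul (M N : Matrix (Fin 2) (Fin 2) R) (α β γ δ : R) :
    mixedDet (α • M + β • N) (γ • M + δ • N) =
      2 * α * γ * det M + (α * δ + β * γ) * mixedDet M N + 2 * β * δ * det N := by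
  simp only [det_fin_two, mixedDet, add_apply, smul_apply, smul_eq_mul]
  ring

def pencilDiscrim (M N : Matrix (Fin 2) (Fin 2) R) : R :=
  discrim (det M) (mixedDet M N) (det N)

theorem pencilDiscrim_smul_add_smul (M N : Matrix (Fin 2) (Fin 2) R) (α β γ δ : R) :
    pencilDiscrim (α • M + β • N) (γ • M + δ • N) = (α * δ - β * γ) ^ 2 * pencilDiscrim M N := by
  rw [pencilDiscrim, det_smul_add_smul, det_smul_add_smul, mixedDet_smul_add_smul]
  exact discrim_linear_subst _ _ _ α β γ δ

end Matrix

open Matrix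

theorem hyperdet_eq_pencilDiscrim (a : Fin 2 → Fin 2 → Fin 2 → ℂ) :
    hyperdet a = pencilDiscrim (of (a 0)) (of (a 1)) := by
  simp only [hyperdet, d₁, d₂, d₃, pencilDiscrim, discrim, mixedDet, det_fin_two, of_apply]
  ring

theorem of_actFst_apply (A : Matrix (Fin 2) (Fin 2) ℂ) (a : Fin 2 → Fin 2 → Fin 2 → ℂ) (i : Fin 2) :
    of (actFst A a i) = A i 0 • of (a 0) + A i 1 • of (a 1) := by
  ext j k
  simp [actFst, Fin.sum_univ_two]

/-- Covariance of the hyperdeterminant: D(A·a) = det(A)² · D(a). -/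
theorem hyperdet_actFst (A : Matrix (Fin 2) (Fin 2) ℂ) (a : Fin 2 → Fin 2 → Fin 2 → ℂ) :
    hyperdet (actFst A a) = A.det ^ 2 * hyperdet a := by
  rw [hyperdet_eq_pencilDiscrim, of_actFst_apply, of_actFst_apply, pencilDiscrim_smul_add_smul,
    det_fin_two, hyperdet_eq_pencilDiscrim]
end

section
/- Assume: (1) τ_a and τ₃ are the concave-roof and convex-roof extensions of the pure-state 3-tangle, and (2) for every three-qubit pure state |ψ_{BCD}⟩, τ₃(|ψ_{BCD}⟩) = √(C_a²(ρ_CD) − C²(ρ_CD)) where ρ_CD = Tr_B|ψ⟩⟨ψ|, C_a is concave and C is convex over mixtures. Then for any four-qubit pure state |φ⟩_{ABCD}: τ_{(A)BCD}² + τ₃²(ρ_{BCD}) ≤ τ₃²(|φ⟩_{[AB]CD}), where τ_{(A)BCD} = √(τ_a²(ρ_{BCD}) − τ₃²(ρ_{BCD})), ρ_{BCD} = Tr_A|φ⟩⟨φ|, and τ₃(|φ⟩_{[AB]CD}) = √(C_a²(ρ_CD) − C²(ρ_CD)) with AB treated as one party. -/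
open scoped ComplexOrder

/-- Reduced density matrix on BCD of a four-qubit pure state (trace out A). -/
noncomputable def trA (φ : Fin 2 × Fin 2 × Fin 2 × Fin 2 → ℂ) :
    Matrix (Fin 2 × Fin 2 × Fin 2) (Fin 2 × Fin 2 × Fin 2) ℂ :=
  fun x y => ∑ a, φ (a, x) * star (φ (a, y))

/-- Reduced density matrix on CD of a four-qubit pure state (trace out A and B). -/
noncomputable def trAB (φ : Fin 2 × Fin 2 × Fin 2 × Fin 2 → ℂ) :
    Matrix (Fin 2 × Fin 2) (Fin 2 × Fin 2) ℂ :=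
  fun x y => ∑ a, ∑ b, φ (a, b, x) * star (φ (a, b, y))

/-- Reduced density matrix on CD of a three-qubit pure state (trace out B). -/
noncomputable def trB3 (ψ : Fin 2 × Fin 2 × Fin 2 → ℂ) :
    Matrix (Fin 2 × Fin 2) (Fin 2 × Fin 2) ℂ :=
  fun x y => ∑ b, ψ (b, x) * star (ψ (b, y))

/-- Pure-state 3-tangle via concurrence and concurrence of assistance:
τ₃(|ψ_{BCD}⟩) = √(C_a²(ρ_CD) − C²(ρ_CD)). -/
noncomputable def τ₃pure (C Ca : Matrix (Fin 2 × Fin 2) (Fin 2 × Fin 2) ℂ → ℝ)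
    (ψ : Fin 2 × Fin 2 × Fin 2 → ℂ) : ℝ :=
  Real.sqrt (Ca (trB3 ψ) ^ 2 - C (trB3 ψ) ^ 2)

/-- Values ∑ pᵢ E(πᵢ) over pure-state decompositions of a three-qubit mixed state. -/
def decompVals (ρ : Matrix (Fin 2 × Fin 2 × Fin 2) (Fin 2 × Fin 2 × Fin 2) ℂ)
    (E : (Fin 2 × Fin 2 × Fin 2 → ℂ) → ℝ) : Set ℝ :=
  {v | ∃ (k : ℕ) (p : Fin k → ℝ) (π : Fin k → Fin 2 × Fin 2 × Fin 2 → ℂ),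
    (∀ i, 0 < p i) ∧ ∑ i, p i = 1 ∧
    (∀ i, ∑ x, Complex.normSq (π i x) = 1) ∧
    ρ = ∑ i, (p i : ℂ) • Matrix.vecMulVec (π i) (star ∘ π i) ∧
    v = ∑ i, p i * E (π i)}

/-- Convex-roof 3-tangle of a three-qubit mixed state. -/
noncomputable def τ₃mix (C Ca : Matrix (Fin 2 × Fin 2) (Fin 2 × Fin 2) ℂ → ℝ)
    (ρ : Matrix (Fin 2 × Fin 2 × Fin 2) (Fin 2 × Fin 2 × Fin 2) ℂ) : ℝ :=
  sInf (decompVals ρ (τ₃pure C Ca))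

/-- Concave-roof 3-tangle of assistance of a three-qubit mixed state. -/
noncomputable def τₐ (C Ca : Matrix (Fin 2 × Fin 2) (Fin 2 × Fin 2) ℂ → ℝ)
    (ρ : Matrix (Fin 2 × Fin 2 × Fin 2) (Fin 2 × Fin 2 × Fin 2) ℂ) : ℝ :=
  sSup (decompVals ρ (τ₃pure C Ca))

/- Take a pure-state decomposition {pᵢ, ψᵢ} of ρ_BCD attaining τₐ. Tracing out B maps it to a
decomposition ρ_CD = ∑ pᵢ σᵢ with σᵢ = Tr_B|ψᵢ⟩⟨ψᵢ|, so τₐ = ∑ pᵢ √(C_a(σᵢ)² − C(σᵢ)²). By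
Cauchy–Schwarz τₐ² ≤ (∑ pᵢ C_a(σᵢ))² − (∑ pᵢ C(σᵢ))², and concavity of C_a and convexity of C
bound this by C_a(ρ_CD)² − C(ρ_CD)². Since 0 ≤ τ₃ ≤ τₐ, the left-hand side of the claim is τₐ². -/

section CauchySchwarz

variable {ι : Type*} (s : Finset ι) {p x y : ι → ℝ}

theorem sq_sum_mul_sqrt_sq_sub_sq_le (hp : ∀ i ∈ s, 0 ≤ p i) (hy : ∀ i ∈ s, 0 ≤ y i)
    (hyx : ∀ i ∈ s, y i ≤ x i) :
    (∑ i ∈ s, p i * √(x i ^ 2 - y i ^ 2)) ^ 2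
      ≤ (∑ i ∈ s, p i * x i) ^ 2 - (∑ i ∈ s, p i * y i) ^ 2 := by
  -- `x² − y² = (x − y)(x + y)`, and Cauchy–Schwarz is applied to the weights `p (x ∓ y)`.
  have hcs := Finset.sum_sq_le_sum_mul_sum_of_sq_le_mul s
    (r := fun i => p i * √(x i ^ 2 - y i ^ 2))
    (f := fun i => p i * (x i - y i)) (g := fun i => p i * (x i + y i))
    (fun i hi => mul_nonneg (hp i hi) (by linarith [hyx i hi]))
    (fun i hi => mul_nonneg (hp i hi) (by linarith [hy i hi, hyx i hi]))
    (fun i hi => le_of_eq <| by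
      rw [mul_pow, Real.sq_sqrt (by nlinarith [hy i hi, hyx i hi])]
      ring)
  calc (∑ i ∈ s, p i * √(x i ^ 2 - y i ^ 2)) ^ 2
      ≤ (∑ i ∈ s, p i * (x i - y i)) * ∑ i ∈ s, p i * (x i + y i) := hcs
    _ = (∑ i ∈ s, p i * x i) ^ 2 - (∑ i ∈ s, p i * y i) ^ 2 := by
      simp only [mul_sub, mul_add, Finset.sum_sub_distrib, Finset.sum_add_distrib]
      ring

end CauchySchwarz

namespace Matrix

variable {β α R : Type*} [Fintype β] [CommRing R]

def partialTraceFst : Matrix (β × α) (β × α) R →ₗ[R] Matrix α α R where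
  toFun M := ∑ b, M.submatrix (Prod.mk b) (Prod.mk b)
  map_add' M N := by rw [← Finset.sum_add_distrib]; rfl
  map_smul' c M := by rw [RingHom.id_apply, Finset.smul_sum]; rfl

theorem partialTraceFst_apply (M : Matrix (β × α) (β × α) R) (x y : α) :
    partialTraceFst M x y = ∑ b, M (b, x) (b, y) := by
  simp [partialTraceFst, sum_apply]

theorem PosSemidef.partialTraceFst [PartialOrder R] [StarRing R] [StarOrderedRing R]
    {M : Matrix (β × α) (β × α) R} (hM : M.PosSemidef) : (partialTraceFst M).PosSemidef :=
  posSemidef_sum _ fun b _ => hM.submatrix (Prod.mk b)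

end Matrix

open Matrix

theorem trA_eq_partialTraceFst (φ : Fin 2 × Fin 2 × Fin 2 × Fin 2 → ℂ) :
    trA φ = partialTraceFst (vecMulVec φ (star φ)) := by
  ext x y
  simp [trA, partialTraceFst_apply, vecMulVec_apply]

theorem trAB_eq_partialTraceFst_trA (φ : Fin 2 × Fin 2 × Fin 2 × Fin 2 → ℂ) :
    trAB φ = partialTraceFst (trA φ) := by
  ext x y
  simp only [trAB, trA, partialTraceFst_apply]
  exact Finset.sum_comm

theorem trB3_eq_partialTraceFst (ψ : Fin 2 × Fin 2 × Fin 2 → ℂ) :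
    trB3 ψ = partialTraceFst (vecMulVec ψ (star ψ)) := by
  ext x y
  simp [trB3, partialTraceFst_apply, vecMulVec_apply]

theorem trB3_posSemidef (ψ : Fin 2 × Fin 2 × Fin 2 → ℂ) : (trB3 ψ).PosSemidef := by
  rw [trB3_eq_partialTraceFst]
  exact (posSemidef_vecMulVec_self_star ψ).partialTraceFst

theorem trAB_posSemidef (φ : Fin 2 × Fin 2 × Fin 2 × Fin 2 → ℂ) : (trAB φ).PosSemidef := by
  rw [trAB_eq_partialTraceFst_trA, trA_eq_partialTraceFst]
  exact (posSemidef_vecMulVec_self_star φ).partialTraceFst.partialTraceFst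

theorem trAB_eq_sum_trB3 {φ : Fin 2 × Fin 2 × Fin 2 × Fin 2 → ℂ} {k : ℕ} {p : Fin k → ℝ}
    {π : Fin k → Fin 2 × Fin 2 × Fin 2 → ℂ}
    (h : trA φ = ∑ i, (p i : ℂ) • vecMulVec (π i) (star ∘ π i)) :
    trAB φ = ∑ i, (p i : ℂ) • trB3 (π i) := by
  simp only [trAB_eq_partialTraceFst_trA, h, map_sum, map_smul, trB3_eq_partialTraceFst]
  rfl

section Roofs

variable {C Ca : Matrix (Fin 2 × Fin 2) (Fin 2 × Fin 2) ℂ → ℝ}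
  {ρ : Matrix (Fin 2 × Fin 2 × Fin 2) (Fin 2 × Fin 2 × Fin 2) ℂ}

theorem nonneg_of_mem_decompVals_τ₃pure {v : ℝ} (hv : v ∈ decompVals ρ (τ₃pure C Ca)) :
    0 ≤ v := by
  obtain ⟨k, p, π, hp, -, -, -, rfl⟩ := hv
  exact Finset.sum_nonneg fun i _ => mul_nonneg (hp i).le (Real.sqrt_nonneg _)

theorem τ₃mix_nonneg : 0 ≤ τ₃mix C Ca ρ :=
  Real.sInf_nonneg fun _ => nonneg_of_mem_decompVals_τ₃pure

theorem τ₃mix_le_of_mem_decompVals {v : ℝ} (hv : v ∈ decompVals ρ (τ₃pure C Ca)) :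
    τ₃mix C Ca ρ ≤ v :=
  csInf_le ⟨0, fun _ => nonneg_of_mem_decompVals_τ₃pure⟩ hv

end Roofs

theorem sq_le_of_mem_decompVals_trA (C Ca : Matrix (Fin 2 × Fin 2) (Fin 2 × Fin 2) ℂ → ℝ)
    (hCconv : ∀ (k : ℕ) (p : Fin k → ℝ) (σ : Fin k → Matrix (Fin 2 × Fin 2) (Fin 2 × Fin 2) ℂ),
      (∀ i, 0 ≤ p i) → ∑ i, p i = 1 →
      C (∑ i, (p i : ℂ) • σ i) ≤ ∑ i, p i * C (σ i))
    (hCaconc : ∀ (k : ℕ) (p : Fin k → ℝ) (σ : Fin k → Matrix (Fin 2 × Fin 2) (Fin 2 × Fin 2) ℂ),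
      (∀ i, 0 ≤ p i) → ∑ i, p i = 1 →
      ∑ i, p i * Ca (σ i) ≤ Ca (∑ i, (p i : ℂ) • σ i))
    (hC0 : ∀ ρ : Matrix (Fin 2 × Fin 2) (Fin 2 × Fin 2) ℂ, ρ.PosSemidef → 0 ≤ C ρ)
    (hCCa : ∀ ρ : Matrix (Fin 2 × Fin 2) (Fin 2 × Fin 2) ℂ, ρ.PosSemidef → C ρ ≤ Ca ρ)
    {φ : Fin 2 × Fin 2 × Fin 2 × Fin 2 → ℂ} {v : ℝ}
    (hv : v ∈ decompVals (trA φ) (τ₃pure C Ca)) :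
    v ^ 2 ≤ Ca (trAB φ) ^ 2 - C (trAB φ) ^ 2 := by
  obtain ⟨k, p, π, hp, hsum, -, hρ, rfl⟩ := hv
  have hp' : ∀ i, 0 ≤ p i := fun i => (hp i).le
  have hmix := trAB_eq_sum_trB3 hρ
  have hC_le_Ca : ∀ i, C (trB3 (π i)) ≤ Ca (trB3 (π i)) := fun i => hCCa _ (trB3_posSemidef _)
  have hC_nonneg : ∀ i, 0 ≤ C (trB3 (π i)) := fun i => hC0 _ (trB3_posSemidef _)
  calc (∑ i, p i * τ₃pure C Ca (π i)) ^ 2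
      ≤ (∑ i, p i * Ca (trB3 (π i))) ^ 2 - (∑ i, p i * C (trB3 (π i))) ^ 2 :=
        sq_sum_mul_sqrt_sq_sub_sq_le _ (fun i _ => hp' i) (fun i _ => hC_nonneg i)
          (fun i _ => hC_le_Ca i)
    _ ≤ Ca (trAB φ) ^ 2 - C (trAB φ) ^ 2 := by
      have hCa := hmix ▸ hCaconc k p (fun i => trB3 (π i)) hp' hsum
      have hC := hmix ▸ hCconv k p (fun i => trB3 (π i)) hp' hsum
      have hsumCa_nonneg : 0 ≤ ∑ i, p i * Ca (trB3 (π i)) :=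
        Finset.sum_nonneg fun i _ => mul_nonneg (hp' i) ((hC_nonneg i).trans (hC_le_Ca i))
      gcongr
      exact hC0 _ (trAB_posSemidef φ)

theorem monogamy_tau4_general
    (C Ca : Matrix (Fin 2 × Fin 2) (Fin 2 × Fin 2) ℂ → ℝ)
    (hCconv : ∀ (k : ℕ) (p : Fin k → ℝ) (σ : Fin k → Matrix (Fin 2 × Fin 2) (Fin 2 × Fin 2) ℂ),
      (∀ i, 0 ≤ p i) → ∑ i, p i = 1 →
      C (∑ i, (p i : ℂ) • σ i) ≤ ∑ i, p i * C (σ i))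
    (hCaconc : ∀ (k : ℕ) (p : Fin k → ℝ) (σ : Fin k → Matrix (Fin 2 × Fin 2) (Fin 2 × Fin 2) ℂ),
      (∀ i, 0 ≤ p i) → ∑ i, p i = 1 →
      ∑ i, p i * Ca (σ i) ≤ Ca (∑ i, (p i : ℂ) • σ i))
    (hC0 : ∀ ρ : Matrix (Fin 2 × Fin 2) (Fin 2 × Fin 2) ℂ, ρ.PosSemidef → 0 ≤ C ρ)
    (hCCa : ∀ ρ : Matrix (Fin 2 × Fin 2) (Fin 2 × Fin 2) ℂ, ρ.PosSemidef → C ρ ≤ Ca ρ)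
    (φ : Fin 2 × Fin 2 × Fin 2 × Fin 2 → ℂ)
    (hattain : τₐ C Ca (trA φ) ∈ decompVals (trA φ) (τ₃pure C Ca)) :
    Real.sqrt (τₐ C Ca (trA φ) ^ 2 - τ₃mix C Ca (trA φ) ^ 2) ^ 2
        + τ₃mix C Ca (trA φ) ^ 2
      ≤ Ca (trAB φ) ^ 2 - C (trAB φ) ^ 2 := by
  have hτₐ := sq_le_of_mem_decompVals_trA C Ca hCconv hCaconc hC0 hCCa hattain
  have hτ₃_nonneg : 0 ≤ τ₃mix C Ca (trA φ) := τ₃mix_nonneg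
  have hτ₃_le : τ₃mix C Ca (trA φ) ≤ τₐ C Ca (trA φ) := τ₃mix_le_of_mem_decompVals hattain
  rw [Real.sq_sqrt (by nlinarith)]
  linarith

/-- Monogamy relation: τ_{(A)BCD}² + τ₃²(ρ_{BCD}) ≤ τ₃²(|φ⟩_{[AB]CD}). -/
theorem monogamy_tau4
    (C Ca : Matrix (Fin 2 × Fin 2) (Fin 2 × Fin 2) ℂ → ℝ)
    (hCconv : ∀ (k : ℕ) (p : Fin k → ℝ) (σ : Fin k → Matrix (Fin 2 × Fin 2) (Fin 2 × Fin 2) ℂ),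
      (∀ i, 0 ≤ p i) → ∑ i, p i = 1 →
      C (∑ i, (p i : ℂ) • σ i) ≤ ∑ i, p i * C (σ i))
    (hCaconc : ∀ (k : ℕ) (p : Fin k → ℝ) (σ : Fin k → Matrix (Fin 2 × Fin 2) (Fin 2 × Fin 2) ℂ),
      (∀ i, 0 ≤ p i) → ∑ i, p i = 1 →
      ∑ i, p i * Ca (σ i) ≤ Ca (∑ i, (p i : ℂ) • σ i))
    (hC0 : ∀ ρ : Matrix (Fin 2 × Fin 2) (Fin 2 × Fin 2) ℂ, ρ.PosSemidef → 0 ≤ C ρ)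
    (hCCa : ∀ ρ : Matrix (Fin 2 × Fin 2) (Fin 2 × Fin 2) ℂ, ρ.PosSemidef → C ρ ≤ Ca ρ)
    (φ : Fin 2 × Fin 2 × Fin 2 × Fin 2 → ℂ)
    (hφ : ∑ x, Complex.normSq (φ x) = 1)
    (hattain : τₐ C Ca (trA φ) ∈ decompVals (trA φ) (τ₃pure C Ca)) :
    Real.sqrt (τₐ C Ca (trA φ) ^ 2 - τ₃mix C Ca (trA φ) ^ 2) ^ 2
        + τ₃mix C Ca (trA φ) ^ 2
      ≤ Ca (trAB φ) ^ 2 - C (trAB φ) ^ 2 :=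
  monogamy_tau4_general C Ca hCconv hCaconc hC0 hCCa φ hattain
end
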